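/- arXiv:2603.09803 — 6 statements merged into one kernel-verified Lean document; each statement's English description precedes it below -/
import Mathlib

section
/- Let μ be a strictly positive probability mass function on E_Q × E_R × Q × R satisfying the independence assumptions (A1) and (A2). Then for every eq ∈ E_Q, er ∈ E_R, q ∈ Q, r ∈ R, the conditioned policy decomposes as P(r | eq, er, q) = P(r | q) · P(er | q, r, eq) / P(er | eq). -/
open Finset

noncomputable section

variable {EQ ER Q R : Type*} [Fintype EQ] [Fintype ER] [Fintype Q] [Fintype R]

/-- Conditional probability `P(r | eq, er, q)`. -/
def prR_given_EqErQ (μ : EQ × ER × Q × R → ℝ) (eq : EQ) (er : ER) (q : Q) (r : R) : ℝ :=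
  μ (eq, er, q, r) / ∑ r' : R, μ (eq, er, q, r')

/-- Conditional probability `P(r | eq, q)`. -/
def prR_given_EqQ (μ : EQ × ER × Q × R → ℝ) (eq : EQ) (q : Q) (r : R) : ℝ :=
  (∑ er : ER, μ (eq, er, q, r)) / ∑ er : ER, ∑ r' : R, μ (eq, er, q, r')

/-- Conditional probability `P(r | q)`. -/
def prR_given_Q (μ : EQ × ER × Q × R → ℝ) (q : Q) (r : R) : ℝ :=
  (∑ eq : EQ, ∑ er : ER, μ (eq, er, q, r)) /
    ∑ eq : EQ, ∑ er : ER, ∑ r' : R, μ (eq, er, q, r')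

/-- Conditional probability `P(er | q, r, eq)`. -/
def prEr_given_QREq (μ : EQ × ER × Q × R → ℝ) (eq : EQ) (er : ER) (q : Q) (r : R) : ℝ :=
  μ (eq, er, q, r) / ∑ er' : ER, μ (eq, er', q, r)

/-- Conditional probability `P(er | q, eq)`. -/
def prEr_given_QEq (μ : EQ × ER × Q × R → ℝ) (eq : EQ) (er : ER) (q : Q) : ℝ :=
  (∑ r' : R, μ (eq, er, q, r')) / ∑ er' : ER, ∑ r' : R, μ (eq, er', q, r')

/-- Conditional probability `P(er | eq)`. -/
def prEr_given_Eq (μ : EQ × ER × Q × R → ℝ) (eq : EQ) (er : ER) : ℝ :=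
  (∑ q : Q, ∑ r : R, μ (eq, er, q, r)) /
    ∑ er' : ER, ∑ q : Q, ∑ r : R, μ (eq, er', q, r)

/-- **Bayesian identity (Lemma 1).** If the strictly positive pmf `μ` satisfies the
independence assumptions (A1) `P(r | eq, q) = P(r | q)` and (A2) `P(er | q, eq) = P(er | eq)`,
then the conditioned policy decomposes as
`P(r | eq, er, q) = P(r | q) · P(er | q, r, eq) / P(er | eq)`. -/
theorem bayesian_identity [Nonempty EQ] [Nonempty ER] [Nonempty Q] [Nonempty R]
    (μ : EQ × ER × Q × R → ℝ)
    (hpos : ∀ x, 0 < μ x) (hsum : ∑ x : EQ × ER × Q × R, μ x = 1)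
    (hA1 : ∀ (eq : EQ) (q : Q) (r : R), prR_given_EqQ μ eq q r = prR_given_Q μ q r)
    (hA2 : ∀ (eq : EQ) (er : ER) (q : Q), prEr_given_QEq μ eq er q = prEr_given_Eq μ eq er)
    (eq : EQ) (er : ER) (q : Q) (r : R) :
    prR_given_EqErQ μ eq er q r =
      prR_given_Q μ q r * prEr_given_QREq μ eq er q r / prEr_given_Eq μ eq er := by
  rw [← hA1 eq q r, ← hA2 eq er q]
  unfold prR_given_EqErQ prR_given_EqQ prEr_given_QREq prEr_given_QEq
  have h1 : 0 < ∑ r' : R, μ (eq, er, q, r') :=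
    Finset.sum_pos (fun _ _ => hpos _) Finset.univ_nonempty
  have h2 : 0 < ∑ er' : ER, μ (eq, er', q, r) :=
    Finset.sum_pos (fun _ _ => hpos _) Finset.univ_nonempty
  have h3 : 0 < ∑ er' : ER, ∑ r' : R, μ (eq, er', q, r') :=
    Finset.sum_pos (fun _ _ => Finset.sum_pos (fun _ _ => hpos _) Finset.univ_nonempty)
      Finset.univ_nonempty
  field_simp

end
end

section
/- Let μ be a strictly positive probability mass function on E_Q × E_R × Q × R satisfying the independence assumptions (A1) and (A2), and let Rew : Q × R → ℝ be any reward function. Then for every fixed demonstration e = (eq, er) ∈ E_Q × E_R and every q ∈ Q, the expected reward under the conditioned policy equals the expected likelihood-ratio-reweighted reward under the base policy: Σ_{r ∈ R} P(r | eq, er, q) · Rew(q, r) = Σ_{r ∈ R} P(r | q) · (P(er | q, r, eq) / P(er | eq)) · Rew(q, r). -/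
open Finset

noncomputable section

variable {EQ ER Q R : Type*} [Fintype EQ] [Fintype ER] [Fintype Q] [Fintype R]

/-- **Expected reward under the conditioned policy equals the likelihood-ratio-reweighted
expected reward under the base policy**, for a strictly positive pmf satisfying the
independence assumptions (A1) and (A2), any reward `Rew`, any fixed demonstration
`(eq, er)` and any question `q`. -/
theorem conditioned_expected_reward_eq_reweighted
    [Nonempty EQ] [Nonempty ER] [Nonempty Q] [Nonempty R]
    (μ : EQ × ER × Q × R → ℝ)
    (hpos : ∀ x, 0 < μ x) (hsum : ∑ x : EQ × ER × Q × R, μ x = 1)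
    (hA1 : ∀ (eq : EQ) (q : Q) (r : R), prR_given_EqQ μ eq q r = prR_given_Q μ q r)
    (hA2 : ∀ (eq : EQ) (er : ER) (q : Q), prEr_given_QEq μ eq er q = prEr_given_Eq μ eq er)
    (Rew : Q × R → ℝ) (eq : EQ) (er : ER) (q : Q) :
    ∑ r : R, prR_given_EqErQ μ eq er q r * Rew (q, r) =
      ∑ r : R, prR_given_Q μ q r *
        (prEr_given_QREq μ eq er q r / prEr_given_Eq μ eq er) * Rew (q, r) := by
  refine Finset.sum_congr rfl fun r _ => ?_
  have key : prR_given_EqErQ μ eq er q r =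
      prR_given_Q μ q r * (prEr_given_QREq μ eq er q r / prEr_given_Eq μ eq er) := by
    rw [← hA1 eq q r, ← hA2 eq er q]
    unfold prR_given_EqErQ prR_given_EqQ prEr_given_QREq prEr_given_QEq
    have h1 : 0 < ∑ r' : R, μ (eq, er, q, r') :=
      Finset.sum_pos (fun _ _ => hpos _) Finset.univ_nonempty
    have h2 : 0 < ∑ er' : ER, μ (eq, er', q, r) :=
      Finset.sum_pos (fun _ _ => hpos _) Finset.univ_nonempty
    have h3 : 0 < ∑ er' : ER, ∑ r' : R, μ (eq, er', q, r') :=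
      Finset.sum_pos (fun _ _ => Finset.sum_pos (fun _ _ => hpos _) Finset.univ_nonempty)
        Finset.univ_nonempty
    field_simp
  rw [key]

end
end

section
/- (Implicit Reweighting, Part I.) Let μ be a strictly positive probability mass function on E_Q × E_R × Q × R satisfying the independence assumptions (A1) and (A2), let 𝔈 ⊆ E_Q × E_R be a nonempty finite demonstration set, and let Rew : Q × R → ℝ be a reward function. Then for every q ∈ Q, the In-Context RLVR objective equals the reweighted zero-shot objective: (1/|𝔈|) Σ_{(eq,er) ∈ 𝔈} Σ_{r ∈ R} P(r | eq, er, q) · Rew(q, r) = Σ_{r ∈ R} P(r | q) · Rew(q, r) · w(q, r), where w(q, r) := (1/|𝔈|) Σ_{(eq,er) ∈ 𝔈} P(er | q, r, eq) / P(er | eq); moreover w(q, r) = (1/|𝔈|) Σ_{e ∈ 𝔈} exp(Δ_e(q, r)), where Δ_e(q, r) := log P(er | q, r, eq) − log P(er | eq) for e = (eq, er). -/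
open Finset

noncomputable section

variable {EQ ER Q R : Type*} [Fintype EQ] [Fintype ER] [Fintype Q] [Fintype R]

/-- **Implicit Reweighting, Part I.** For a strictly positive pmf satisfying (A1) and (A2),
a nonempty finite demonstration set `𝔈` and a reward `Rew`, the In-Context RLVR objective
`(1/|𝔈|) ∑_{e ∈ 𝔈} ∑_r P(r | e, q) Rew(q,r)` equals the reweighted zero-shot objective
`∑_r P(r | q) Rew(q,r) w(q,r)` with
`w(q,r) = (1/|𝔈|) ∑_{(eq,er) ∈ 𝔈} P(er | q, r, eq) / P(er | eq)`; moreover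
`w(q,r) = (1/|𝔈|) ∑_{e ∈ 𝔈} exp (Δ_e(q,r))`
where `Δ_e(q,r) = log P(er | q, r, eq) − log P(er | eq)`. -/
theorem implicit_reweighting_part_I
    [Nonempty EQ] [Nonempty ER] [Nonempty Q] [Nonempty R]
    (μ : EQ × ER × Q × R → ℝ)
    (hpos : ∀ x, 0 < μ x) (hsum : ∑ x : EQ × ER × Q × R, μ x = 1)
    (hA1 : ∀ (eq : EQ) (q : Q) (r : R), prR_given_EqQ μ eq q r = prR_given_Q μ q r)
    (hA2 : ∀ (eq : EQ) (er : ER) (q : Q), prEr_given_QEq μ eq er q = prEr_given_Eq μ eq er)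
    (𝔈 : Finset (EQ × ER)) (h𝔈 : 𝔈.Nonempty) (Rew : Q × R → ℝ) (q : Q)
    (w : Q → R → ℝ)
    (hw : ∀ r : R, w q r =
      (𝔈.card : ℝ)⁻¹ * ∑ e ∈ 𝔈, prEr_given_QREq μ e.1 e.2 q r / prEr_given_Eq μ e.1 e.2) :
    ((𝔈.card : ℝ)⁻¹ * ∑ e ∈ 𝔈, ∑ r : R, prR_given_EqErQ μ e.1 e.2 q r * Rew (q, r)
        = ∑ r : R, prR_given_Q μ q r * Rew (q, r) * w q r) ∧
    (∀ r : R, w q r = (𝔈.card : ℝ)⁻¹ *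
        ∑ e ∈ 𝔈, Real.exp (Real.log (prEr_given_QREq μ e.1 e.2 q r)
          - Real.log (prEr_given_Eq μ e.1 e.2))) := by
  classical
  -- positivity of the various sums
  have hsum1 : ∀ (eq : EQ) (er : ER), 0 < ∑ r' : R, μ (eq, er, q, r') := fun eq er =>
    Finset.sum_pos (fun _ _ => hpos _) Finset.univ_nonempty
  have hsum2 : ∀ (eq : EQ) (r : R), 0 < ∑ er' : ER, μ (eq, er', q, r) := fun eq r =>
    Finset.sum_pos (fun _ _ => hpos _) Finset.univ_nonempty
  have hsum3 : ∀ (eq : EQ), 0 < ∑ er' : ER, ∑ r' : R, μ (eq, er', q, r') := fun eq =>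
    Finset.sum_pos (fun _ _ => hsum1 eq _) Finset.univ_nonempty
  have hsum4 : ∀ (r : R), 0 < ∑ eq : EQ, ∑ er : ER, μ (eq, er, q, r) := fun r =>
    Finset.sum_pos (fun _ _ => hsum2 _ r) Finset.univ_nonempty
  have hsum5 : 0 < ∑ eq : EQ, ∑ er : ER, ∑ r' : R, μ (eq, er, q, r') :=
    Finset.sum_pos (fun _ _ => hsum3 _) Finset.univ_nonempty
  have hEr_pos : ∀ (eq : EQ) (er : ER), 0 < prEr_given_Eq μ eq er := by
    intro eq er
    rw [← hA2 eq er q]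
    exact div_pos (hsum1 eq er) (hsum3 eq)
  have hQREq_pos : ∀ (eq : EQ) (er : ER) (r : R), 0 < prEr_given_QREq μ eq er q r := by
    intro eq er r
    exact div_pos (hpos _) (hsum2 eq r)
  -- key Bayes identity
  have key : ∀ (eq : EQ) (er : ER) (r : R),
      prR_given_EqErQ μ eq er q r
        = prR_given_Q μ q r * (prEr_given_QREq μ eq er q r / prEr_given_Eq μ eq er) := by
    intro eq er r
    rw [← hA2 eq er q, ← hA1 eq q r]
    unfold prR_given_EqErQ prR_given_EqQ prEr_given_QREq prEr_given_QEq
    have h1 := (hsum1 eq er).ne'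
    have h2 := (hsum2 eq r).ne'
    have h3 := (hsum3 eq).ne'
    field_simp
  constructor
  · have : ∀ e ∈ 𝔈, ∑ r : R, prR_given_EqErQ μ e.1 e.2 q r * Rew (q, r)
        = ∑ r : R, prR_given_Q μ q r * Rew (q, r)
            * (prEr_given_QREq μ e.1 e.2 q r / prEr_given_Eq μ e.1 e.2) := by
      intro e _
      refine Finset.sum_congr rfl fun r _ => ?_
      rw [key e.1 e.2 r]; ring
    rw [Finset.sum_congr rfl this, Finset.sum_comm]
    rw [Finset.mul_sum]
    refine Finset.sum_congr rfl fun r _ => ?_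
    rw [hw r, Finset.mul_sum, Finset.mul_sum, Finset.mul_sum]
    refine Finset.sum_congr rfl fun e _ => ?_
    rw [div_eq_mul_inv]; ring
  · intro r
    rw [hw r]
    congr 1
    refine Finset.sum_congr rfl fun e _ => ?_
    rw [Real.exp_sub, Real.exp_log (hQREq_pos e.1 e.2 r), Real.exp_log (hEr_pos e.1 e.2)]

end
end

section
/- (Quantitative version of Implicit Reweighting, Part II, multiplicative form.) Let μ be a strictly positive probability mass function on E_Q × E_R × Q × R and let 𝔈 ⊆ E_Q × E_R be a nonempty finite demonstration set. For q ∈ Q and r ∈ R, define Δ_e(q, r) := log P(er | q, r, eq) − log P(er | eq) for e = (eq, er) ∈ 𝔈, the Evidence Gain Δ(q, r) := (1/|𝔈|) Σ_{e ∈ 𝔈} Δ_e(q, r), the weight w(q, r) := (1/|𝔈|) Σ_{e ∈ 𝔈} exp(Δ_e(q, r)), the variance V(q, r) := (1/|𝔈|) Σ_{e ∈ 𝔈} (Δ_e(q, r) − Δ(q, r))², and the sup-deviation δ(q, r) := max_{e ∈ 𝔈} |Δ_e(q, r) − Δ(q, r)|. Then |w(q, r) · exp(−Δ(q, r)) − (1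 + V(q, r)/2)| ≤ exp(δ(q, r)) · δ(q, r) · V(q, r) / 6. -/
open Finset

noncomputable section

open scoped Nat in
private lemma abs_exp_sub_quad (x : ℝ) :
    |Real.exp x - (1 + x + x ^ 2 / 2)| ≤ Real.exp |x| * |x| ^ 3 / 6 := by
  have hexp : ∀ y : ℝ, Real.exp y = ∑' n : ℕ, y ^ n / n ! := fun y => by
    rw [Real.exp_eq_exp_ℝ, NormedSpace.exp_eq_tsum_div]
  have hs := Real.summable_pow_div_factorial x
  have hf : Summable (fun n : ℕ => x ^ (n + 3) / ((n + 3)! : ℝ)) :=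
    (summable_nat_add_iff 3).2 hs
  have hsplit : Real.exp x - (1 + x + x ^ 2 / 2) = ∑' n : ℕ, x ^ (n + 3) / (n + 3)! := by
    have h := hs.sum_add_tsum_nat_add 3
    have hr : ∑ i ∈ Finset.range 3, x ^ i / (i ! : ℝ) = 1 + x + x ^ 2 / 2 := by
      norm_num [Finset.sum_range_succ, Nat.factorial]
    rw [hexp x, ← h, hr]; ring
  have hfact : ∀ n : ℕ, (6 : ℝ) * n ! ≤ (n + 3)! := by
    intro n
    have hd : 3 ! * n ! ∣ (3 + n)! := Nat.factorial_mul_factorial_dvd_factorial_add 3 n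
    have h2 : 6 * n ! ≤ (3 + n)! := Nat.le_of_dvd (Nat.factorial_pos _)
      (by simpa [Nat.factorial] using hd)
    rw [add_comm 3 n] at h2
    exact_mod_cast h2
  have hterm : ∀ n : ℕ, |x ^ (n + 3) / ((n + 3)! : ℝ)| ≤ |x| ^ 3 / 6 * (|x| ^ n / n !) := by
    intro n
    rw [abs_div, abs_pow, Nat.abs_cast]
    have h1 : |x| ^ (n + 3) / ((n + 3)! : ℝ) ≤ |x| ^ (n + 3) / (6 * n !) :=
      div_le_div_of_nonneg_left (by positivity) (by positivity) (hfact n)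
    refine h1.trans_eq ?_
    rw [pow_add]
    have hn : (n ! : ℝ) ≠ 0 := by positivity
    field_simp
  have hg : Summable (fun n : ℕ => |x| ^ 3 / 6 * (|x| ^ n / n !)) :=
    (Real.summable_pow_div_factorial |x|).mul_left _
  have habs : |∑' n : ℕ, x ^ (n + 3) / ((n + 3)! : ℝ)|
      ≤ ∑' n : ℕ, |x ^ (n + 3) / ((n + 3)! : ℝ)| := by
    have := norm_tsum_le_tsum_norm
      (f := fun n : ℕ => x ^ (n + 3) / ((n + 3)! : ℝ))
      (by simpa only [Real.norm_eq_abs] using hf.abs)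
    simpa only [Real.norm_eq_abs] using this
  have h2 : ∑' n : ℕ, |x ^ (n + 3) / ((n + 3)! : ℝ)|
      ≤ ∑' n : ℕ, |x| ^ 3 / 6 * (|x| ^ n / n !) := Summable.tsum_le_tsum hterm hf.abs hg
  have h3 : ∑' n : ℕ, |x| ^ 3 / 6 * (|x| ^ n / n !) = |x| ^ 3 / 6 * Real.exp |x| := by
    rw [tsum_mul_left, ← hexp]
  rw [hsplit]
  calc |∑' n : ℕ, x ^ (n + 3) / ((n + 3)! : ℝ)| ≤ |x| ^ 3 / 6 * Real.exp |x| :=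
        habs.trans (h2.trans_eq h3)
    _ = Real.exp |x| * |x| ^ 3 / 6 := by ring

variable {EQ ER Q R : Type*} [Fintype EQ] [Fintype ER] [Fintype Q] [Fintype R]

/-- The per-demonstration gain `Δ_e(q, r) = log P(er | q, r, eq) − log P(er | eq)`. -/
def perDemoGain (μ : EQ × ER × Q × R → ℝ) (e : EQ × ER) (q : Q) (r : R) : ℝ :=
  Real.log (prEr_given_QREq μ e.1 e.2 q r) - Real.log (prEr_given_Eq μ e.1 e.2)

/-- **Quantitative Implicit Reweighting, Part II (multiplicative form).** For a strictly
positive pmf `μ`, a nonempty finite demonstration set `𝔈`, and any `q, r`, with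
Evidence Gain `Δ`, weight `w`, variance `V`, and sup-deviation `δ` defined from the
per-demonstration gains `Δ_e(q,r)`, we have
`|w · exp (−Δ) − (1 + V/2)| ≤ exp δ · δ · V / 6`. -/
theorem implicit_reweighting_part_II_multiplicative
    [Nonempty EQ] [Nonempty ER] [Nonempty Q] [Nonempty R]
    (μ : EQ × ER × Q × R → ℝ)
    (hpos : ∀ x, 0 < μ x) (hsum : ∑ x : EQ × ER × Q × R, μ x = 1)
    (𝔈 : Finset (EQ × ER)) (h𝔈 : 𝔈.Nonempty) (q : Q) (r : R)
    (Δ w V δ : ℝ)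
    (hΔ : Δ = (𝔈.card : ℝ)⁻¹ * ∑ e ∈ 𝔈, perDemoGain μ e q r)
    (hw : w = (𝔈.card : ℝ)⁻¹ * ∑ e ∈ 𝔈, Real.exp (perDemoGain μ e q r))
    (hV : V = (𝔈.card : ℝ)⁻¹ * ∑ e ∈ 𝔈, (perDemoGain μ e q r - Δ) ^ 2)
    (hδ : δ = 𝔈.sup' h𝔈 fun e => |perDemoGain μ e q r - Δ|) :
    |w * Real.exp (-Δ) - (1 + V / 2)| ≤ Real.exp δ * δ * V / 6 := by
  set f : EQ × ER → ℝ := fun e => perDemoGain μ e q r - Δ with hfdef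
  have hcard : (0 : ℝ) < (𝔈.card : ℝ) := by
    exact_mod_cast Finset.card_pos.mpr h𝔈
  have hcne : (𝔈.card : ℝ) ≠ 0 := hcard.ne'
  have hsum0 : ∑ e ∈ 𝔈, f e = 0 := by
    simp only [hfdef, Finset.sum_sub_distrib, Finset.sum_const, nsmul_eq_mul, hΔ]
    field_simp
    simp
  have hδe : ∀ e ∈ 𝔈, |f e| ≤ δ := by
    intro e he
    rw [hδ]
    exact Finset.le_sup' (fun e => |perDemoGain μ e q r - Δ|) he
  have hδ0 : 0 ≤ δ := by
    obtain ⟨e₀, he₀⟩ := h𝔈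
    exact (abs_nonneg (f e₀)).trans (hδe e₀ he₀)
  have hexpeq : ∑ e ∈ 𝔈, Real.exp (f e)
      = (∑ e ∈ 𝔈, Real.exp (perDemoGain μ e q r)) * Real.exp (-Δ) := by
    rw [Finset.sum_mul]
    refine Finset.sum_congr rfl fun e _ => ?_
    rw [hfdef, ← Real.exp_add]
    ring_nf
  have hkey : w * Real.exp (-Δ) - (1 + V / 2)
      = (𝔈.card : ℝ)⁻¹ * ∑ e ∈ 𝔈, (Real.exp (f e) - (1 + f e + f e ^ 2 / 2)) := by
    have hsplit : ∑ e ∈ 𝔈, (Real.exp (f e) - (1 + f e + f e ^ 2 / 2))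
        = (∑ e ∈ 𝔈, Real.exp (perDemoGain μ e q r)) * Real.exp (-Δ)
          - ((𝔈.card : ℝ) + (∑ e ∈ 𝔈, f e ^ 2) / 2) := by
      rw [Finset.sum_sub_distrib, hexpeq]
      congr 1
      rw [Finset.sum_add_distrib, Finset.sum_add_distrib, hsum0, ← Finset.sum_div]
      simp
    rw [hw, hV, hsplit]
    field_simp
    ring
  rw [hkey]
  have hbound : ∀ e ∈ 𝔈, |Real.exp (f e) - (1 + f e + f e ^ 2 / 2)|
      ≤ Real.exp δ * δ * f e ^ 2 / 6 := by
    intro e he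
    refine (abs_exp_sub_quad (f e)).trans ?_
    have h1 : Real.exp |f e| ≤ Real.exp δ := Real.exp_le_exp.2 (hδe e he)
    have h2 : |f e| ^ 3 ≤ δ * f e ^ 2 := by
      have : |f e| ^ 3 = |f e| * f e ^ 2 := by rw [← sq_abs]; ring
      rw [this]
      exact mul_le_mul_of_nonneg_right (hδe e he) (sq_nonneg _)
    have h3 : Real.exp |f e| * |f e| ^ 3 ≤ Real.exp δ * (δ * f e ^ 2) :=
      mul_le_mul h1 h2 (by positivity) (Real.exp_pos _).le
    calc Real.exp |f e| * |f e| ^ 3 / 6 ≤ Real.exp δ * (δ * f e ^ 2) / 6 :=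
        (div_le_div_iff_of_pos_right (by norm_num : (0:ℝ) < 6)).mpr h3
      _ = Real.exp δ * δ * f e ^ 2 / 6 := by ring
  calc |(𝔈.card : ℝ)⁻¹ * ∑ e ∈ 𝔈, (Real.exp (f e) - (1 + f e + f e ^ 2 / 2))|
      = (𝔈.card : ℝ)⁻¹ * |∑ e ∈ 𝔈, (Real.exp (f e) - (1 + f e + f e ^ 2 / 2))| := by
        rw [abs_mul, abs_of_pos (by positivity)]
    _ ≤ (𝔈.card : ℝ)⁻¹ * ∑ e ∈ 𝔈, |Real.exp (f e) - (1 + f e + f e ^ 2 / 2)| := by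
        exact mul_le_mul_of_nonneg_left (Finset.abs_sum_le_sum_abs _ _) (by positivity)
    _ ≤ (𝔈.card : ℝ)⁻¹ * ∑ e ∈ 𝔈, Real.exp δ * δ * f e ^ 2 / 6 :=
        mul_le_mul_of_nonneg_left (Finset.sum_le_sum hbound) (by positivity)
    _ = Real.exp δ * δ * V / 6 := by
        rw [hV]
        rw [← Finset.sum_div, ← Finset.mul_sum]
        field_simp
        rfl
end
end

section
/- (Quantitative version of Implicit Reweighting, Part II, logarithmic form.) Let S be a nonempty finite set and X : S → ℝ. Let m := (1/|S|) Σ_{s ∈ S} X_s, V := (1/|S|) Σ_{s ∈ S} (X_s − m)², δ := max_{s ∈ S} |X_s − m|, and w := (1/|S|) Σ_{s ∈ S} exp(X_s). If exp(δ) · δ · V / 6 ≤ 1/2, then |log(w) − m − log(1 + V/2)| ≤ exp(δ) · δ · V / 3. In particular, the log-weight equals the Evidence Gain plus the variance correction log(1 + V/2), up to an error controlled by the sup-deviation of the per-demonstration gains. -/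
open Finset Real

private lemma mono_aux {F F' : ℝ → ℝ} (hd : ∀ x, HasDerivAt F (F' x) x)
    (h0 : F 0 = 0) (hF' : ∀ x, 0 ≤ x → 0 ≤ F' x) : ∀ x, 0 ≤ x → 0 ≤ F x := by
  intro x hx
  have hmono : MonotoneOn F (Set.Ici 0) :=
    monotoneOn_of_deriv_nonneg (convex_Ici 0)
      (fun y _ => (hd y).continuousAt.continuousWithinAt)
      (fun y hy => (hd y).differentiableAt.differentiableWithinAt)
      (fun y hy => by
        rw [(hd y).deriv]
        exact hF' y (le_of_lt (by simpa [interior_Ici] using hy)))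
  have := hmono Set.self_mem_Ici (Set.mem_Ici.2 hx) hx
  linarith [this, h0.symm ▸ this]

private lemma l7 (x : ℝ) : exp x - 1 ≤ x * exp x := by
  have h := add_one_le_exp (-x)
  rw [exp_neg] at h
  have h2 := mul_le_mul_of_nonneg_right h (exp_pos x).le
  rw [inv_mul_cancel₀ (exp_ne_zero x)] at h2
  nlinarith [h2]

private lemma l6 (x : ℝ) (hx : 0 ≤ x) : exp x - 1 - x ≤ exp x * x ^ 2 / 2 := by
  have key := mono_aux (F := fun x => exp x * x ^ 2 / 2 - exp x + 1 + x)
    (F' := fun x => (exp x * x ^ 2 + exp x * (2 * x)) / 2 - exp x + 1)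
    (fun x => by
      have h1 : HasDerivAt (fun x : ℝ => exp x * x ^ 2) (exp x * x ^ 2 + exp x * (2 * x)) x := by
        have hp := hasDerivAt_pow 2 x
        simp at hp
        exact (Real.hasDerivAt_exp x).mul hp
      exact ((h1.div_const 2).sub (Real.hasDerivAt_exp x)).add_const 1 |>.add (hasDerivAt_id x))
    (by norm_num)
    (fun x hx => by nlinarith [l7 x, exp_pos x, sq_nonneg x])
  nlinarith [key x hx]

private lemma l5 (x : ℝ) (hx : 0 ≤ x) : exp x - 1 - x - x ^ 2 / 2 ≤ exp x * x ^ 3 / 6 := by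
  have key := mono_aux (F := fun x => exp x * x ^ 3 / 6 - exp x + 1 + (x + x ^ 2 / 2))
    (F' := fun x => (exp x * x ^ 3 + exp x * (3 * x ^ 2)) / 6 - exp x + (1 + 2 * x / 2))
    (fun x => by
      have h1 : HasDerivAt (fun x : ℝ => exp x * x ^ 3) (exp x * x ^ 3 + exp x * (3 * x ^ 2)) x := by
        have hp := hasDerivAt_pow 3 x
        simp at hp
        exact (Real.hasDerivAt_exp x).mul hp
      have h2 : HasDerivAt (fun x : ℝ => x ^ 2 / 2) (2 * x / 2) x := by
        simpa using (hasDerivAt_pow 2 x).div_const 2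
      exact ((((h1.div_const 6).sub (Real.hasDerivAt_exp x)).add_const 1).add
        ((hasDerivAt_id x).add h2)))
    (by norm_num)
    (fun x hx => by nlinarith [l6 x hx, exp_pos x, sq_nonneg x, pow_nonneg hx 3])
  nlinarith [key x hx]

private lemma l4 (x : ℝ) (hx : 0 ≤ x) : 1 + x + x ^ 2 / 2 ≤ exp x := by
  have key := mono_aux (F := fun x => exp x - 1 - x - x ^ 2 / 2)
    (F' := fun x => exp x - 1 - 2 * x / 2)
    (fun x => by
      have h2 : HasDerivAt (fun x : ℝ => x ^ 2 / 2) (2 * x / 2) x := by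
        simpa using (hasDerivAt_pow 2 x).div_const 2
      exact (((Real.hasDerivAt_exp x).sub_const 1).sub (hasDerivAt_id x)).sub h2)
    (by norm_num)
    (fun x hx => by nlinarith [add_one_le_exp x])
  nlinarith [key x hx]

private lemma l2' (y : ℝ) (hy : 0 ≤ y) : exp (-y) ≤ 1 - y + y ^ 2 / 2 := by
  have key := mono_aux (F := fun y => 1 - y + y ^ 2 / 2 - exp (-y))
    (F' := fun y => -1 + 2 * y / 2 - -exp (-y))
    (fun y => by
      have h2 : HasDerivAt (fun y : ℝ => y ^ 2 / 2) (2 * y / 2) y := by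
        simpa using (hasDerivAt_pow 2 y).div_const 2
      have h3 : HasDerivAt (fun y : ℝ => exp (-y)) (-exp (-y)) y := by
        exact ((hasDerivAt_id y).neg.exp).congr_deriv (by simp)
      exact ((((hasDerivAt_id y).neg.const_add 1).add h2).sub h3))
    (by norm_num)
    (fun y hy => by nlinarith [add_one_le_exp (-y)])
  nlinarith [key y hy]

private lemma l3' (y : ℝ) (hy : 0 ≤ y) : 1 - y + y ^ 2 / 2 - y ^ 3 / 6 ≤ exp (-y) := by
  have key := mono_aux (F := fun y => exp (-y) - 1 + y - y ^ 2 / 2 + y ^ 3 / 6)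
    (F' := fun y => -exp (-y) + 1 - 2 * y / 2 + 3 * y ^ 2 / 6)
    (fun y => by
      have h2 : HasDerivAt (fun y : ℝ => y ^ 2 / 2) (2 * y / 2) y := by
        simpa using (hasDerivAt_pow 2 y).div_const 2
      have h4 : HasDerivAt (fun y : ℝ => y ^ 3 / 6) (3 * y ^ 2 / 6) y := by
        simpa using (hasDerivAt_pow 3 y).div_const 6
      have h3 : HasDerivAt (fun y : ℝ => exp (-y)) (-exp (-y)) y := by
        exact ((hasDerivAt_id y).neg.exp).congr_deriv (by simp)
      exact (((h3.sub_const 1).add (hasDerivAt_id y)).sub h2).add h4)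
    (by norm_num)
    (fun y hy => by nlinarith [l2' y hy])
  nlinarith [key y hy]

private lemma cubic (x : ℝ) : |exp x - 1 - x - x ^ 2 / 2| ≤ exp |x| * |x| ^ 3 / 6 := by
  rcases le_or_gt 0 x with hx | hx
  · rw [abs_of_nonneg hx, abs_le]
    constructor
    · nlinarith [l4 x hx, exp_pos x, pow_nonneg hx 3]
    · exact l5 x hx
  · have hy : 0 ≤ -x := by linarith
    rw [abs_of_neg hx, abs_le]
    have h2 := l2' (-x) hy
    have h3 := l3' (-x) hy
    rw [neg_neg] at h2 h3
    have h1 : (1 : ℝ) ≤ exp (-x) := by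
      rw [← Real.exp_zero]; exact exp_le_exp.2 hy
    constructor
    · nlinarith [mul_le_mul_of_nonneg_right h1 (pow_nonneg hy 3)]
    · nlinarith [mul_le_mul_of_nonneg_right h1 (pow_nonneg hy 3)]

private lemma log_bound (u : ℝ) (h : |u| ≤ 1 / 2) : |Real.log (1 + u)| ≤ 2 * |u| := by
  have hb := abs_le.1 h
  have h1 : (0 : ℝ) < 1 + u := by linarith [hb.1]
  rw [abs_le]
  constructor
  · have := Real.log_le_sub_one_of_pos (inv_pos.2 h1)
    rw [Real.log_inv] at this
    have h2 : (1 + u)⁻¹ - 1 = -u / (1 + u) := by field_simp; ring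
    rcases le_or_gt 0 u with hu | hu
    · have : -Real.log (1 + u) ≤ (1 + u)⁻¹ - 1 := this
      have h3 : (1 + u)⁻¹ ≤ 1 := by
        rw [inv_le_one_iff₀]; right; linarith
      nlinarith [abs_nonneg u]
    · rw [abs_of_neg hu]
      have h4 : (1 + u)⁻¹ ≤ 1 - 2 * u := by
        rw [inv_le_iff_one_le_mul₀ h1]
        nlinarith [hb.1]
      linarith [this]
  · have h5 := Real.log_le_sub_one_of_pos h1
    calc Real.log (1 + u) ≤ u := by linarith
      _ ≤ |u| := le_abs_self u
      _ ≤ 2 * |u| := by nlinarith [abs_nonneg u]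

set_option maxHeartbeats 1000000 in
/-- **Quantitative Implicit Reweighting, Part II (logarithmic form).** Let `S` be a
nonempty finite set and `X : S → ℝ`, with mean `m`, variance `V`, sup-deviation `δ`,
and mean exponential `w`. If `exp δ · δ · V / 6 ≤ 1/2`, then
`|log w − m − log (1 + V/2)| ≤ exp δ · δ · V / 3`. -/
theorem implicit_reweighting_part_II_logarithmic {ι : Type*}
    (S : Finset ι) (hS : S.Nonempty) (X : ι → ℝ)
    (m V δ w : ℝ)
    (hm : m = (S.card : ℝ)⁻¹ * ∑ s ∈ S, X s)
    (hV : V = (S.card : ℝ)⁻¹ * ∑ s ∈ S, (X s - m) ^ 2)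
    (hδ : δ = S.sup' hS fun s => |X s - m|)
    (hw : w = (S.card : ℝ)⁻¹ * ∑ s ∈ S, Real.exp (X s))
    (hsmall : Real.exp δ * δ * V / 6 ≤ 1 / 2) :
    |Real.log w - m - Real.log (1 + V / 2)| ≤ Real.exp δ * δ * V / 3 := by
  have hcard : (0 : ℝ) < (S.card : ℝ) := by
    exact_mod_cast Finset.card_pos.2 hS
  set n : ℝ := (S.card : ℝ) with hn
  -- basic positivity facts
  obtain ⟨s₀, hs₀⟩ := hS
  have hδ0 : 0 ≤ δ := by
    rw [hδ]
    exact le_trans (abs_nonneg _) (Finset.le_sup' (fun s => |X s - m|) hs₀)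
  have hδle : ∀ s ∈ S, |X s - m| ≤ δ := by
    intro s hs; rw [hδ]; exact Finset.le_sup' (fun s => |X s - m|) hs
  have hV0 : 0 ≤ V := by
    rw [hV]
    positivity
  -- mean of deviations is zero
  have hsum0 : ∑ s ∈ S, (X s - m) = 0 := by
    have : ∑ s ∈ S, X s = n * m := by
      rw [hm]; field_simp
    rw [Finset.sum_sub_distrib, this, Finset.sum_const, nsmul_eq_mul]
    ring
  -- the mean exponential of deviations
  set A : ℝ := n⁻¹ * ∑ s ∈ S, Real.exp (X s - m) with hA
  have hApos : 0 < A := by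
    apply mul_pos (inv_pos.2 hcard)
    exact Finset.sum_pos (fun s _ => Real.exp_pos _) ⟨s₀, hs₀⟩
  have hwA : w = Real.exp m * A := by
    rw [hw, hA]
    have hsc : ∑ s ∈ S, Real.exp (X s) = ∑ s ∈ S, Real.exp (X s - m) * Real.exp m := by
      refine Finset.sum_congr rfl fun s _ => ?_
      rw [← Real.exp_add]; ring_nf
    rw [hsc, ← Finset.sum_mul]
    ring
  -- key estimate: |A - (1 + V/2)| ≤ exp δ * δ * V / 6
  set E : ℝ := Real.exp δ * δ * V / 6 with hE
  have hE0 : 0 ≤ E := by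
    rw [hE]; positivity
  have hkey : |A - (1 + V / 2)| ≤ E := by
    have hrepr : A - (1 + V / 2) =
        n⁻¹ * ∑ s ∈ S, (Real.exp (X s - m) - 1 - (X s - m) - (X s - m) ^ 2 / 2) := by
      rw [hA, hV, Finset.sum_sub_distrib, Finset.sum_sub_distrib, Finset.sum_sub_distrib,
        hsum0, Finset.sum_const, nsmul_eq_mul, ← Finset.sum_div, ← hn]
      field_simp
      ring
    rw [hrepr, abs_mul, abs_of_nonneg (inv_nonneg.2 hcard.le)]
    have hbound : |∑ s ∈ S, (Real.exp (X s - m) - 1 - (X s - m) - (X s - m) ^ 2 / 2)|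
        ≤ ∑ s ∈ S, Real.exp δ * δ * (X s - m) ^ 2 / 6 := by
      refine le_trans (Finset.abs_sum_le_sum_abs _ _) (Finset.sum_le_sum ?_)
      intro s hs
      refine le_trans (cubic (X s - m)) ?_
      have h1 : |X s - m| ≤ δ := hδle s hs
      have h2 : Real.exp |X s - m| ≤ Real.exp δ := Real.exp_le_exp.2 h1
      have h3 : |X s - m| ^ 3 = |X s - m| * (X s - m) ^ 2 := by
        rw [← sq_abs]; ring
      rw [h3]
      have h4 := mul_le_mul h2 (mul_le_mul_of_nonneg_right h1 (sq_nonneg (X s - m)))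
        (by positivity) (Real.exp_pos δ).le
      linarith
    calc n⁻¹ * |∑ s ∈ S, (Real.exp (X s - m) - 1 - (X s - m) - (X s - m) ^ 2 / 2)|
        ≤ n⁻¹ * ∑ s ∈ S, Real.exp δ * δ * (X s - m) ^ 2 / 6 :=
          mul_le_mul_of_nonneg_left hbound (inv_nonneg.2 hcard.le)
      _ = E := by
          rw [hE, hV, ← Finset.sum_div, ← Finset.mul_sum]
          field_simp
  -- smallness
  have hEhalf : E ≤ 1 / 2 := hsmall
  -- now the logarithmic estimate
  have hB : (1 : ℝ) ≤ 1 + V / 2 := by linarith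
  have hBpos : (0 : ℝ) < 1 + V / 2 := by linarith
  set u : ℝ := A / (1 + V / 2) - 1 with hu
  have huabs : |u| ≤ E := by
    rw [hu]
    have : A / (1 + V / 2) - 1 = (A - (1 + V / 2)) / (1 + V / 2) := by field_simp
    rw [this, abs_div, abs_of_pos hBpos]
    exact le_trans (div_le_self (abs_nonneg _) hB) hkey
  have hlog : Real.log w - m - Real.log (1 + V / 2) = Real.log (1 + u) := by
    rw [hwA, Real.log_mul (Real.exp_ne_zero m) (ne_of_gt hApos), Real.log_exp]
    rw [hu]
    have : (1 : ℝ) + (A / (1 + V / 2) - 1) = A / (1 + V / 2) := by ring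
    rw [this, Real.log_div (ne_of_gt hApos) (ne_of_gt hBpos)]
    ring
  rw [hlog]
  calc |Real.log (1 + u)| ≤ 2 * |u| := log_bound u (le_trans huabs hEhalf)
    _ ≤ 2 * E := by linarith [huabs]
    _ = Real.exp δ * δ * V / 3 := by rw [hE]; ring
end

section
/- (Asymptotic version of Implicit Reweighting, Part II.) For each n ∈ ℕ, let S_n be a nonempty finite set and X_n : S_n → ℝ, with mean m_n := (1/|S_n|) Σ_{s ∈ S_n} X_n(s), variance V_n := (1/|S_n|) Σ_{s ∈ S_n} (X_n(s) − m_n)², sup-deviation δ_n := max_{s ∈ S_n} |X_n(s) − m_n|, and mean exponential w_n := (1/|S_n|) Σ_{s ∈ S_n} exp(X_n(s)). Assume V_n > 0 for all n and δ_n → 0 as n → ∞. Then (log(w_n) − m_n − log(1 + V_n/2)) / V_n → 0 as n → ∞; that is, log(w_n) = m_n + log(1 + V_n/2) + o(V_n). -/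
open Finset Filter

private lemma abs_log_one_add_le' {u : ℝ} (h : |u| ≤ 1/2) : |Real.log (1+u)| ≤ 2*|u| := by
  obtain ⟨hl, hr⟩ := abs_le.1 h
  have h1 : (0:ℝ) < 1 + u := by linarith
  have hub : Real.log (1+u) ≤ u := by
    have := Real.log_le_sub_one_of_pos h1; linarith
  have hlb : u/(1+u) ≤ Real.log (1+u) := by
    have h2 : (0:ℝ) < (1+u)⁻¹ := inv_pos.2 h1
    have h3 := Real.log_le_sub_one_of_pos h2
    rw [Real.log_inv] at h3
    have heq : (1+u)⁻¹ - 1 = -(u/(1+u)) := by field_simp; ring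
    rw [heq] at h3; linarith
  have hlb2 : -(2*|u|) ≤ u/(1+u) := by
    rcases le_or_gt 0 u with hu | hu
    · have h4 : 0 ≤ u/(1+u) := div_nonneg hu h1.le
      have : 0 ≤ 2*|u| := by positivity
      linarith
    · have habs : |u| = -u := abs_of_neg hu
      rw [habs, neg_le, ← neg_div, div_le_iff₀ h1]
      nlinarith
  have hle : u ≤ |u| := le_abs_self u
  rw [abs_le]
  exact ⟨by linarith, by linarith⟩

/-- **Asymptotic Implicit Reweighting, Part II.** For each `n`, let `S n` be a nonempty
finite set and `X n : S n → ℝ` with mean `m n`, variance `V n`, sup-deviation `δ n`, and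
mean exponential `w n`. If `V n > 0` for all `n` and `δ n → 0`, then
`(log (w n) − m n − log (1 + V n / 2)) / V n → 0`, i.e.
`log (w n) = m n + log (1 + V n / 2) + o(V n)`. -/
theorem implicit_reweighting_part_II_asymptotic {ι : Type*}
    (S : ℕ → Finset ι) (hS : ∀ n, (S n).Nonempty) (X : ℕ → ι → ℝ)
    (m V δ w : ℕ → ℝ)
    (hm : ∀ n, m n = ((S n).card : ℝ)⁻¹ * ∑ s ∈ S n, X n s)
    (hV : ∀ n, V n = ((S n).card : ℝ)⁻¹ * ∑ s ∈ S n, (X n s - m n) ^ 2)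
    (hδ : ∀ n, δ n = (S n).sup' (hS n) fun s => |X n s - m n|)
    (hw : ∀ n, w n = ((S n).card : ℝ)⁻¹ * ∑ s ∈ S n, Real.exp (X n s))
    (hVpos : ∀ n, 0 < V n)
    (hδ0 : Tendsto δ atTop (nhds 0)) :
    Tendsto (fun n => (Real.log (w n) - m n - Real.log (1 + V n / 2)) / V n)
      atTop (nhds 0) := by
  apply squeeze_zero_norm' (a := fun n => (4/9) * δ n)
  · have hev : ∀ᶠ n in atTop, δ n < 1/2 := hδ0.eventually_lt_const (by norm_num)
    filter_upwards [hev] with n hδhalf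
    set c : ℝ := ((S n).card : ℝ) with hc
    have hcpos : (0:ℝ) < c := by
      rw [hc]
      exact_mod_cast Finset.card_pos.2 (hS n)
    have hYle : ∀ s ∈ S n, |X n s - m n| ≤ δ n := fun s hs => by
      rw [hδ n]; exact Finset.le_sup' (fun t => |X n t - m n|) hs
    have hδnn : 0 ≤ δ n := by
      obtain ⟨s, hs⟩ := hS n
      exact le_trans (abs_nonneg _) (hYle s hs)
    have hsumY : ∑ s ∈ S n, (X n s - m n) = 0 := by
      rw [Finset.sum_sub_distrib, Finset.sum_const, nsmul_eq_mul, hm n]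
      field_simp; ring
    have hVδ : V n ≤ (δ n)^2 := by
      rw [hV n]
      have hb : ∑ s ∈ S n, (X n s - m n)^2 ≤ ∑ s ∈ S n, (δ n)^2 := by
        apply Finset.sum_le_sum
        intro s hs
        have h1 := hYle s hs
        nlinarith [abs_nonneg (X n s - m n), sq_abs (X n s - m n)]
      rw [Finset.sum_const, nsmul_eq_mul] at hb
      calc c⁻¹ * ∑ s ∈ S n, (X n s - m n)^2 ≤ c⁻¹ * (c * (δ n)^2) :=
            mul_le_mul_of_nonneg_left hb (inv_nonneg.2 hcpos.le)
        _ = (δ n)^2 := by field_simp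
    set R : ι → ℝ := fun s => Real.exp (X n s - m n) - (1 + (X n s - m n) + (X n s - m n)^2/2)
      with hR
    have hRbound : ∀ s ∈ S n, |R s| ≤ (2/9) * δ n * (X n s - m n)^2 := by
      intro s hs
      have hy1 : |X n s - m n| ≤ 1 := le_trans (hYle s hs) (by linarith)
      have hb := Real.exp_bound hy1 (n := 3) (by norm_num)
      have hsum3 : ∑ k ∈ Finset.range 3, (X n s - m n) ^ k / (k.factorial : ℝ)
          = 1 + (X n s - m n) + (X n s - m n)^2/2 := by
        simp [Finset.sum_range_succ]
      rw [hsum3] at hb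
      norm_num [Nat.factorial] at hb
      have hb2 : |R s| ≤ |X n s - m n|^3 * (2/9) := by
        rw [hR]
        convert hb using 2
      calc |R s| ≤ |X n s - m n|^3 * (2/9) := hb2
        _ = (2/9) * (|X n s - m n| * |X n s - m n|^2) := by ring
        _ ≤ (2/9) * (δ n * (X n s - m n)^2) := by
            apply mul_le_mul_of_nonneg_left _ (by norm_num)
            rw [sq_abs]
            exact mul_le_mul_of_nonneg_right (hYle s hs) (sq_nonneg _)
        _ = (2/9) * δ n * (X n s - m n)^2 := by ring
    set E : ℝ := c⁻¹ * ∑ s ∈ S n, R s with hE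
    have hEbound : |E| ≤ (2/9) * δ n * V n := by
      rw [hE, abs_mul, abs_inv, abs_of_pos hcpos]
      have h1 : |∑ s ∈ S n, R s| ≤ ∑ s ∈ S n, (2/9) * δ n * (X n s - m n)^2 :=
        le_trans (Finset.abs_sum_le_sum_abs _ _) (Finset.sum_le_sum hRbound)
      calc c⁻¹ * |∑ s ∈ S n, R s| ≤ c⁻¹ * ∑ s ∈ S n, (2/9) * δ n * (X n s - m n)^2 :=
            mul_le_mul_of_nonneg_left h1 (inv_nonneg.2 hcpos.le)
        _ = (2/9) * δ n * (c⁻¹ * ∑ s ∈ S n, (X n s - m n)^2) := by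
            rw [← Finset.mul_sum]; ring
        _ = (2/9) * δ n * V n := by rw [← hV n]
    have hA : c⁻¹ * ∑ s ∈ S n, Real.exp (X n s - m n) = 1 + V n / 2 + E := by
      have hsplit : ∀ s ∈ S n, Real.exp (X n s - m n)
          = 1 + (X n s - m n) + (X n s - m n)^2/2 + R s := by
        intro s _; rw [hR]; ring
      rw [Finset.sum_congr rfl hsplit, Finset.sum_add_distrib, Finset.sum_add_distrib,
        Finset.sum_add_distrib, hsumY, Finset.sum_const, nsmul_eq_mul,
        show (∑ s ∈ S n, (X n s - m n)^2/2) = (∑ s ∈ S n, (X n s - m n)^2)/2 from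
          Finset.sum_div .. |>.symm,
        hV n, hE]
      field_simp
      ring
    have hVd : (0:ℝ) < 1 + V n / 2 := by have := hVpos n; linarith
    have hδ3 : (2/9) * δ n * (δ n)^2 ≤ 1/36 := by nlinarith
    have hEsmall : |E| ≤ 1/36 :=
      le_trans hEbound (le_trans (mul_le_mul_of_nonneg_left hVδ (by positivity)) hδ3)
    have hApos : (0:ℝ) < 1 + V n / 2 + E := by
      have := abs_le.1 hEsmall
      have := hVpos n
      cases abs_le.1 hEsmall with
      | intro hl hr => linarith
    have hwA : w n = Real.exp (m n) * (1 + V n / 2 + E) := by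
      have hsum : ∑ s ∈ S n, Real.exp (X n s)
          = Real.exp (m n) * ∑ s ∈ S n, Real.exp (X n s - m n) := by
        rw [Finset.mul_sum]
        apply Finset.sum_congr rfl
        intro s _
        rw [← Real.exp_add]
        congr 1
        ring
      rw [hw n, hsum, ← hA]
      ring
    set u : ℝ := E / (1 + V n / 2) with hu
    have huE : |u| ≤ |E| := by
      rw [hu, abs_div, abs_of_pos hVd]
      exact div_le_self (abs_nonneg E) (by linarith [hVpos n])
    have hu2 : |u| ≤ 1/2 := le_trans huE (by linarith)
    have hdiff : Real.log (w n) - m n - Real.log (1 + V n / 2) = Real.log (1 + u) := by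
      have hlogw : Real.log (w n) = m n + Real.log (1 + V n / 2 + E) := by
        rw [hwA, Real.log_mul (Real.exp_ne_zero _) hApos.ne', Real.log_exp]
      have hratio : (1 + V n / 2 + E) / (1 + V n / 2) = 1 + u := by
        have h2V : (2:ℝ) + V n ≠ 0 := ne_of_gt (by have := hVpos n; linarith)
        rw [hu]; field_simp
      have hld : Real.log (1 + V n / 2 + E) - Real.log (1 + V n / 2) = Real.log (1 + u) := by
        rw [← Real.log_div hApos.ne' hVd.ne', hratio]
      linarith
    rw [Real.norm_eq_abs, abs_div, abs_of_pos (hVpos n), hdiff, div_le_iff₀ (hVpos n)]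
    calc |Real.log (1 + u)| ≤ 2 * |u| := abs_log_one_add_le' hu2
      _ ≤ 2 * |E| := by linarith
      _ ≤ 2 * ((2/9) * δ n * V n) := by linarith
      _ = 4/9 * δ n * V n := by ring
  · have := hδ0.const_mul (4/9 : ℝ)
    simpa using this
end
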